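/- arXiv:nlin/0105062 — 5 statements merged into one kernel-verified Lean document; each statement's English description precedes it below -/
import Mathlib

section
/- Let X and Y be real normed spaces, e : X → Y an injective continuous linear map, and l_1, …, l_k continuous linear functionals on X that are linearly independent. Define the completeness defect ε_L := sup { ‖e w‖_Y : w ∈ X, ‖w‖_X ≤ 1, l_j(w) = 0 for all j = 1,…,k }. Then there exists a constant C_L ≥ 0 such that for every u ∈ X one has ‖e u‖_Y ≤ ε_L · ‖u‖_X + C_L · max_{1≤j≤k} |l_j(u)|. -/
/-!
Linear independence yields `x j` with `l i (x j) = δ i j`. Then `u - ∑ j, l j u • x j` lies in the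
common kernel of the `l j`, where `‖e w‖ ≤ εL * ‖w‖` by homogeneity, and the triangle inequality
gives the bound with `C = ∑ j, (εL * ‖x j‖ + ‖e (x j)‖)`.
-/

open Module

theorem exists_biorthogonal_of_linearIndependent {ι K V : Type*} [Finite ι] [DecidableEq ι]
    [Field K] [AddCommGroup V] [Module K V] {l : ι → Dual K V} (hl : LinearIndependent K l) :
    ∃ x : ι → V, ∀ i j, l i (x j) = if i = j then 1 else 0 := by
  have hfun : LinearIndependent K fun i => ⇑(l i) :=
    hl.map' (LinearMap.ltoFun K V K K) (LinearMap.ker_eq_bot.2 DFunLike.coe_injective)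
  have hsurj : Function.Surjective (LinearMap.pi l) := by
    rw [← LinearMap.range_eq_top, ← span_flip_eq_top_iff_linearIndependent.2 hfun,
      ← Submodule.span_eq (LinearMap.range _)]
    rfl
  choose x hx using hsurj
  exact ⟨fun j => x (Pi.single j 1), fun i j => by
    simpa [Pi.single_apply] using congrFun (hx (Pi.single j 1)) i⟩

section CompletenessDefect

variable {ι X Y : Type*} [NormedAddCommGroup X] [NormedSpace ℝ X]
  [NormedAddCommGroup Y] [NormedSpace ℝ Y] (e : X →L[ℝ] Y) (l : ι → X →L[ℝ] ℝ)

noncomputable def completenessDefect : ℝ :=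
  sSup {r : ℝ | ∃ w : X, ‖w‖ ≤ 1 ∧ (∀ j, l j w = 0) ∧ r = ‖e w‖}

lemma bddAbove_completenessDefect_set :
    BddAbove {r : ℝ | ∃ w : X, ‖w‖ ≤ 1 ∧ (∀ j, l j w = 0) ∧ r = ‖e w‖} := by
  refine ⟨‖e‖, ?_⟩
  rintro r ⟨w, hw, -, rfl⟩
  simpa using e.le_opNorm_of_le hw

lemma completenessDefect_nonneg : 0 ≤ completenessDefect e l :=
  le_csSup (bddAbove_completenessDefect_set e l) ⟨0, by simp⟩

lemma norm_apply_le_completenessDefect_mul {w : X} (hw : ∀ j, l j w = 0) :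
    ‖e w‖ ≤ completenessDefect e l * ‖w‖ := by
  rcases eq_or_ne w 0 with rfl | hw0
  · simp
  have hpos : 0 < ‖w‖ := norm_pos_iff.2 hw0
  have hunit : ‖e (‖w‖⁻¹ • w)‖ ≤ completenessDefect e l := by
    refine le_csSup (bddAbove_completenessDefect_set e l) ⟨‖w‖⁻¹ • w, ?_, ?_, rfl⟩
    · rw [norm_smul, norm_inv, norm_norm, inv_mul_cancel₀ hpos.ne']
    · simp [hw]
  rw [map_smul, norm_smul, norm_inv, norm_norm, inv_mul_le_iff₀ hpos] at hunit
  linarith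

end CompletenessDefect

section Biorthogonal

variable {ι X Y : Type*} [Fintype ι] [DecidableEq ι] [NormedAddCommGroup X] [NormedSpace ℝ X]
  [NormedAddCommGroup Y] [NormedSpace ℝ Y] {l : ι → X →L[ℝ] ℝ} {x : ι → X}

lemma apply_sub_sum_smul_eq_zero_of_biorthogonal (hx : ∀ i j, l i (x j) = if i = j then 1 else 0)
    (u : X) (i : ι) : l i (u - ∑ j, l j u • x j) = 0 := by
  simp [hx]

lemma norm_apply_le_of_biorthogonal (e : X →L[ℝ] Y)
    (hx : ∀ i j, l i (x j) = if i = j then 1 else 0) {ε : ℝ} (hε : 0 ≤ ε)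
    (hker : ∀ w, (∀ j, l j w = 0) → ‖e w‖ ≤ ε * ‖w‖) (u : X) :
    ‖e u‖ ≤ ε * ‖u‖ + ∑ j, |l j u| * (ε * ‖x j‖ + ‖e (x j)‖) := by
  set w := u - ∑ j, l j u • x j
  have hw : ‖w‖ ≤ ‖u‖ + ∑ j, |l j u| * ‖x j‖ := by
    refine (norm_sub_le _ _).trans (add_le_add_right ((norm_sum_le _ _).trans_eq ?_) _)
    simp [norm_smul]
  have hew : ‖e u - ∑ j, l j u • e (x j)‖ ≤ ε * ‖w‖ := by
    simpa [w, map_sub, map_sum] using hker w (apply_sub_sum_smul_eq_zero_of_biorthogonal hx u)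
  calc ‖e u‖ = ‖(e u - ∑ j, l j u • e (x j)) + ∑ j, l j u • e (x j)‖ := by rw [sub_add_cancel]
    _ ≤ ε * ‖w‖ + ∑ j, |l j u| * ‖e (x j)‖ := by
      refine (norm_add_le _ _).trans (add_le_add hew ((norm_sum_le _ _).trans_eq ?_))
      simp [norm_smul]
    _ ≤ ε * (‖u‖ + ∑ j, |l j u| * ‖x j‖) + ∑ j, |l j u| * ‖e (x j)‖ := by gcongr
    _ = ε * ‖u‖ + ∑ j, |l j u| * (ε * ‖x j‖ + ‖e (x j)‖) := by
      simp only [mul_add, Finset.mul_sum, Finset.sum_add_distrib]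
      ring_nf

end Biorthogonal

theorem stmt_0_general {X Y : Type*} [NormedAddCommGroup X] [NormedSpace ℝ X]
    [NormedAddCommGroup Y] [NormedSpace ℝ Y]
    (e : X →L[ℝ] Y)
    {k : ℕ} (l : Fin k → X →L[ℝ] ℝ)
    (hl : LinearIndependent ℝ l)
    (εL : ℝ)
    (hεL : εL = sSup {r : ℝ | ∃ w : X, ‖w‖ ≤ 1 ∧ (∀ j, l j w = 0) ∧ r = ‖e w‖}) :
    ∃ C : ℝ, 0 ≤ C ∧ ∀ u : X,
      ‖e u‖ ≤ εL * ‖u‖ + C * ⨆ j, |l j u| := by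
  change εL = completenessDefect e l at hεL
  have hε : 0 ≤ εL := hεL ▸ completenessDefect_nonneg e l
  obtain ⟨x, hx⟩ := exists_biorthogonal_of_linearIndependent
    (hl.map' (ContinuousLinearMap.coeLM ℝ)
      (LinearMap.ker_eq_bot.2 ContinuousLinearMap.coe_injective))
  have hcoef : ∀ j, 0 ≤ εL * ‖x j‖ + ‖e (x j)‖ := fun j => by positivity
  refine ⟨∑ j, (εL * ‖x j‖ + ‖e (x j)‖), Finset.sum_nonneg fun j _ => hcoef j, fun u => ?_⟩
  have hmax : ∀ j, |l j u| ≤ ⨆ j, |l j u| := le_ciSup (Set.finite_range _).bddAbove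
  refine (norm_apply_le_of_biorthogonal e hx hε
    (fun w hw => hεL ▸ norm_apply_le_completenessDefect_mul e l hw) u).trans ?_
  rw [Finset.sum_mul]
  refine add_le_add_right (Finset.sum_le_sum fun j _ => ?_) _
  rw [mul_comm _ (⨆ j, |l j u|)]
  exact mul_le_mul_of_nonneg_right (hmax j) (hcoef j)

/-- Let `X` and `Y` be real normed spaces, `e : X → Y` an injective continuous linear map,
and `l 1, …, l k` continuous linear functionals on `X` that are linearly independent.
Define the completeness defect
`εL := sup { ‖e w‖_Y : w ∈ X, ‖w‖_X ≤ 1, l j w = 0 for all j }`.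
Then there exists `C ≥ 0` such that for all `u : X`,
`‖e u‖ ≤ εL * ‖u‖ + C * max_j |l j u|`. -/
theorem stmt_0 {X Y : Type*} [NormedAddCommGroup X] [NormedSpace ℝ X]
    [NormedAddCommGroup Y] [NormedSpace ℝ Y]
    (e : X →L[ℝ] Y) (he : Function.Injective e)
    {k : ℕ} (hk : 0 < k) (l : Fin k → X →L[ℝ] ℝ)
    (hl : LinearIndependent ℝ l)
    (εL : ℝ)
    (hεL : εL = sSup {r : ℝ | ∃ w : X, ‖w‖ ≤ 1 ∧ (∀ j, l j w = 0) ∧ r = ‖e w‖}) :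
    ∃ C : ℝ, 0 ≤ C ∧ ∀ u : X,
      ‖e u‖ ≤ εL * ‖u‖ + C * ⨆ j, |l j u| :=
  stmt_0_general e l hl εL hεL
end

section
/- Let X and Y be real normed spaces, e : X → Y an injective continuous linear map, and l_1, …, l_k continuous linear functionals on X that are linearly independent, with completeness defect ε_L := sup { ‖e w‖_Y : w ∈ X, ‖w‖_X ≤ 1, l_j(w) = 0 for all j }. Assume ε_L > 0. Then for every δ > 0 there exists a constant C_δ ≥ 0 such that for all u ∈ X: ‖u‖_X² ≥ (1+δ)^{-1} · ε_L^{-2} · ‖e u‖_Y² − C_δ · max_{1≤j≤k} |l_j(u)|². -/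
/-- Linearly independent functionals admit a dual family. -/
lemma exists_dual_family {X : Type*} [NormedAddCommGroup X] [NormedSpace ℝ X]
    {k : ℕ} (l : Fin k → X →L[ℝ] ℝ) (hl : LinearIndependent ℝ l) :
    ∃ x : Fin k → X, ∀ i j, l i (x j) = if i = j then 1 else 0 := by
  set Φ : X →ₗ[ℝ] (Fin k → ℝ) := LinearMap.pi (fun j => (l j : X →ₗ[ℝ] ℝ)) with hΦ
  have hsurj : Function.Surjective Φ := by
    rw [← LinearMap.range_eq_top]
    by_contra h
    obtain ⟨φ, hφne, hφ⟩ := (LinearMap.range Φ).exists_dual_map_eq_bot_of_lt_top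
      (lt_top_iff_ne_top.2 h) inferInstance
    have hvan : ∀ u : X, φ (Φ u) = 0 := by
      intro u
      have : φ (Φ u) ∈ Submodule.map φ (LinearMap.range Φ) :=
        Submodule.mem_map_of_mem (LinearMap.mem_range_self Φ u)
      rwa [hφ, Submodule.mem_bot] at this
    have hcomb : ∀ u : X, (∑ j, φ (Pi.single j 1) * l j u) = 0 := by
      intro u
      have := hvan u
      have hΦu : Φ u = ∑ j, (l j u) • (Pi.single j 1 : Fin k → ℝ) := by
        ext i
        simp [hΦ, LinearMap.pi_apply, Finset.sum_apply, Pi.single_apply, mul_comm]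
      rw [hΦu, map_sum] at this
      simpa [map_smul, smul_eq_mul, mul_comm] using this
    have : ∀ j, φ (Pi.single j 1) = 0 := by
      have := Fintype.linearIndependent_iff.1 hl (fun j => φ (Pi.single j 1)) ?_
      · exact this
      · ext u
        simpa using hcomb u
    apply hφne
    apply LinearMap.ext
    intro v
    have hv : v = ∑ j, (v j) • (Pi.single j 1 : Fin k → ℝ) := by
      ext i; simp [Finset.sum_apply, Pi.single_apply, mul_comm]
    rw [hv, map_sum]
    simp [this]
  choose x hx using fun j => hsurj (Pi.single j (1:ℝ))
  refine ⟨x, fun i j => ?_⟩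
  have := congrFun (hx j) i
  simp only [hΦ, LinearMap.pi_apply, ContinuousLinearMap.coe_coe] at this
  rw [this, Pi.single_apply]

/-- Let `X`, `Y` be real normed spaces, `e : X → Y` an injective continuous linear map,
`l 1, …, l k` linearly independent continuous linear functionals on `X`, with
completeness defect `εL := sup { ‖e w‖_Y : ‖w‖_X ≤ 1, l j w = 0 ∀ j }`, and `εL > 0`.
Then for every `δ > 0` there is `C_δ ≥ 0` such that for all `u : X`
`‖u‖² ≥ (1+δ)⁻¹ · εL⁻² · ‖e u‖² − C_δ · max_j |l j u|²`. -/
theorem stmt_1 {X Y : Type*} [NormedAddCommGroup X] [NormedSpace ℝ X]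
    [NormedAddCommGroup Y] [NormedSpace ℝ Y]
    (e : X →L[ℝ] Y) (he : Function.Injective e)
    {k : ℕ} (hk : 0 < k) (l : Fin k → X →L[ℝ] ℝ)
    (hl : LinearIndependent ℝ l)
    (εL : ℝ)
    (hεL : εL = sSup {r : ℝ | ∃ w : X, ‖w‖ ≤ 1 ∧ (∀ j, l j w = 0) ∧ r = ‖e w‖})
    (hεL_pos : 0 < εL) :
    ∀ δ : ℝ, 0 < δ → ∃ C : ℝ, 0 ≤ C ∧ ∀ u : X,
      ‖u‖ ^ 2 ≥ (1 + δ)⁻¹ * (εL ^ 2)⁻¹ * ‖e u‖ ^ 2 - C * (⨆ j, |l j u|) ^ 2 := by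
  haveI : Nonempty (Fin k) := ⟨⟨0, hk⟩⟩
  -- key bound on the kernel
  set S := {r : ℝ | ∃ w : X, ‖w‖ ≤ 1 ∧ (∀ j, l j w = 0) ∧ r = ‖e w‖} with hS
  have hbdd : BddAbove S := by
    by_contra h
    rw [hεL, Real.sSup_of_not_bddAbove h] at hεL_pos
    exact lt_irrefl 0 hεL_pos
  have hker : ∀ w : X, (∀ j, l j w = 0) → ‖e w‖ ≤ εL * ‖w‖ := by
    intro w hw
    rcases eq_or_ne w 0 with rfl | hw0
    · simp
    · have hnw : (0:ℝ) < ‖w‖ := norm_pos_iff.2 hw0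
      have hmem : ‖e (‖w‖⁻¹ • w)‖ ∈ S := by
        refine ⟨‖w‖⁻¹ • w, ?_, fun j => ?_, rfl⟩
        · rw [norm_smul, norm_inv, norm_norm]
          rw [inv_mul_cancel₀ hnw.ne']
        · simp [hw j]
      have hle : ‖e (‖w‖⁻¹ • w)‖ ≤ εL := hεL ▸ le_csSup hbdd hmem
      have : ‖e (‖w‖⁻¹ • w)‖ = ‖w‖⁻¹ * ‖e w‖ := by
        rw [map_smul, norm_smul, norm_inv, norm_norm]
      rw [this] at hle
      calc ‖e w‖ = ‖w‖ * (‖w‖⁻¹ * ‖e w‖) := by field_simp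
        _ ≤ ‖w‖ * εL := by exact mul_le_mul_of_nonneg_left hle hnw.le
        _ = εL * ‖w‖ := mul_comm _ _
  -- dual family
  obtain ⟨x, hx⟩ := exists_dual_family l hl
  intro δ hδ
  set M : ℝ := ∑ j, ‖x j‖ with hM
  set N : ℝ := ∑ j, ‖e (x j)‖ with hN
  have hM0 : 0 ≤ M := Finset.sum_nonneg fun _ _ => norm_nonneg _
  have hN0 : 0 ≤ N := Finset.sum_nonneg fun _ _ => norm_nonneg _
  set K : ℝ := εL * M + N with hK
  have hK0 : 0 ≤ K := by positivity
  refine ⟨(1 + δ)⁻¹ * (εL ^ 2)⁻¹ * ((1 + δ⁻¹) * K ^ 2), by positivity, fun u => ?_⟩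
  set s : ℝ := ⨆ j, |l j u| with hs
  have hjs : ∀ j, |l j u| ≤ s := fun j =>
    le_ciSup (f := fun j => |l j u|) (Set.Finite.bddAbove (Set.finite_range _)) j
  have hs0 : 0 ≤ s := le_trans (abs_nonneg _) (hjs ⟨0, hk⟩)
  -- decomposition
  set v : X := ∑ j, (l j u) • x j with hv
  set w : X := u - v with hw
  have hwl : ∀ j, l j w = 0 := by
    intro j
    simp only [hw, hv, map_sub, map_sum, map_smul, smul_eq_mul, hx]
    rw [Finset.sum_eq_single j]
    · simp
    · intro b _ hb; simp [Ne.symm hb]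
    · intro h; exact absurd (Finset.mem_univ j) h
  have hvn : ‖v‖ ≤ s * M := by
    calc ‖v‖ ≤ ∑ j, ‖(l j u) • x j‖ := norm_sum_le _ _
      _ = ∑ j, |l j u| * ‖x j‖ := by simp [norm_smul, Real.norm_eq_abs]
      _ ≤ ∑ j, s * ‖x j‖ :=
          Finset.sum_le_sum fun j _ => mul_le_mul_of_nonneg_right (hjs j) (norm_nonneg _)
      _ = s * M := by rw [hM, Finset.mul_sum]
  have hevn : ‖e v‖ ≤ s * N := by
    calc ‖e v‖ = ‖∑ j, (l j u) • e (x j)‖ := by rw [hv, map_sum]; simp [map_smul]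
      _ ≤ ∑ j, ‖(l j u) • e (x j)‖ := norm_sum_le _ _
      _ = ∑ j, |l j u| * ‖e (x j)‖ := by simp [norm_smul, Real.norm_eq_abs]
      _ ≤ ∑ j, s * ‖e (x j)‖ :=
          Finset.sum_le_sum fun j _ => mul_le_mul_of_nonneg_right (hjs j) (norm_nonneg _)
      _ = s * N := by rw [hN, Finset.mul_sum]
  have hwn : ‖w‖ ≤ ‖u‖ + s * M := le_trans (norm_sub_le _ _) (by linarith)
  have heu : ‖e u‖ ≤ εL * ‖u‖ + K * s := by
    have : ‖e u‖ ≤ ‖e w‖ + ‖e v‖ := by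
      have : e u = e w + e v := by rw [hw, map_sub]; abel
      rw [this]; exact norm_add_le _ _
    have h2 : ‖e w‖ ≤ εL * (‖u‖ + s * M) :=
      le_trans (hker w hwl) (mul_le_mul_of_nonneg_left hwn hεL_pos.le)
    calc ‖e u‖ ≤ εL * (‖u‖ + s * M) + s * N := by linarith
      _ = εL * ‖u‖ + K * s := by rw [hK]; ring
  clear_value s K M N v w
  clear hv hw hs hK hM hN
  -- Young and conclusion
  have hsq : ‖e u‖ ^ 2 ≤ (1 + δ) * εL ^ 2 * ‖u‖ ^ 2 + (1 + δ⁻¹) * K ^ 2 * s ^ 2 := by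
    have h1 : ‖e u‖ ^ 2 ≤ (εL * ‖u‖ + K * s) ^ 2 := by
      have := heu
      nlinarith [norm_nonneg (e u), norm_nonneg u, mul_nonneg hK0 hs0,
        mul_nonneg hεL_pos.le (norm_nonneg u)]
    have h2 : (εL * ‖u‖ + K * s) ^ 2 ≤ (1 + δ) * εL ^ 2 * ‖u‖ ^ 2 + (1 + δ⁻¹) * K ^ 2 * s ^ 2 := by
      have hδi : 0 < δ⁻¹ := inv_pos.2 hδ
      have key : 2 * (εL * ‖u‖) * (K * s) ≤ δ * (εL * ‖u‖) ^ 2 + δ⁻¹ * (K * s) ^ 2 := by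
        nlinarith [mul_nonneg hδi.le (sq_nonneg (δ * (εL * ‖u‖) - K * s)),
          inv_mul_cancel₀ hδ.ne', mul_pos hδ hδi]
      nlinarith [key]
    linarith
  have hmul : (1 + δ)⁻¹ * (εL ^ 2)⁻¹ * ‖e u‖ ^ 2 ≤
      (1 + δ)⁻¹ * (εL ^ 2)⁻¹ * ((1 + δ) * εL ^ 2 * ‖u‖ ^ 2 + (1 + δ⁻¹) * K ^ 2 * s ^ 2) :=
    mul_le_mul_of_nonneg_left hsq (by positivity)
  have heq : (1 + δ)⁻¹ * (εL ^ 2)⁻¹ * ((1 + δ) * εL ^ 2 * ‖u‖ ^ 2 + (1 + δ⁻¹) * K ^ 2 * s ^ 2)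
      = ‖u‖ ^ 2 + (1 + δ)⁻¹ * (εL ^ 2)⁻¹ * ((1 + δ⁻¹) * K ^ 2) * s ^ 2 := by
    field_simp
  rw [ge_iff_le, sub_le_iff_le_add]
  calc (1 + δ)⁻¹ * (εL ^ 2)⁻¹ * ‖e u‖ ^ 2
      ≤ ‖u‖ ^ 2 + (1 + δ)⁻¹ * (εL ^ 2)⁻¹ * ((1 + δ⁻¹) * K ^ 2) * s ^ 2 := heq ▸ hmul
    _ = ‖u‖ ^ 2 + (1 + δ)⁻¹ * (εL ^ 2)⁻¹ * ((1 + δ⁻¹) * K ^ 2) * s ^ 2 := rfl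
end

section
/- Let (Ω, F, P) be a probability space and T : Ω → Ω an invertible transformation such that both T and T^{-1} are measurable and measure-preserving, and T is ergodic. Let Q : Ω → ℝ be integrable with E[Q] < 0, and let b : Ω → [0,∞) be measurable and tempered, i.e. for almost every ω, log⁺ b(T^n ω)/|n| → 0 as n → ±∞. Let y_k : Ω → [0,∞) (k ∈ ℕ) and η_j : Ω → [0,∞) (j ∈ ℕ) be measurable and suppose: (i) η_j(ω) ≤ b(T^j ω) for all j and ω; (ii) η_j → 0 in probability as j → ∞; (iii) for every k ≥ 1 and almost every ω, y_k(ω) ≤ y_0(ω) · exp(Σ_{j=0}^{k−1} Q(T^j ω)) + Σ_{j=0}^{k−1} exp(Σ_{j'=j}^{k−1} Q(T^{j'} ω)) · η_j(ω). Then y_k → 0 in probability as k → ∞. -/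
/-!
Read the noise sum backwards from the present point `T^[k] ω`: the noise injected `m` steps ago
carries the weight `exp` of a backward Birkhoff sum of `Q` along `S = T⁻¹` and is bounded by `b`
at `S^[m] (T^[k] ω)`. The maximal ergodic theorem, applied to `T` and to `S`, bounds the Birkhoff
sums of `Q` by `n · E[Q] / 2 + C(ω)`, while temperedness makes `b ∘ S^[n]` grow subexponentially;
so these bounds are a.s. summable, and since `T^[k]` preserves `P` the distant past contributes
uniformly little in probability. The finitely many recent terms tend to zero in probability
because `η j` does and their weights are stationary, and the initial term
`y 0 · exp (birkhoffSum T Q k)` tends to zero almost surely.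
-/

open MeasureTheory Filter Topology Asymptotics
open scoped ENNReal

section InProbability

variable {Ω : Type*} [MeasurableSpace Ω] {P : Measure Ω}

-- One-sided: this is convergence in probability to `0` only for nonnegative sequences.
def TendstoZeroInProbability (P : Measure Ω) (X : ℕ → Ω → ℝ) : Prop :=
  ∀ δ : ℝ, 0 < δ → Tendsto (fun k => P {ω | δ ≤ X k ω}) atTop (𝓝 0)

theorem measure_le_le_add_of_ae_le_add {X U V : Ω → ℝ} (h : ∀ᵐ ω ∂P, X ω ≤ U ω + V ω) (δ : ℝ) :
    P {ω | δ ≤ X ω} ≤ P {ω | δ / 2 ≤ U ω} + P {ω | δ / 2 ≤ V ω} := by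
  refine (measure_mono_ae (h.mono fun ω hω (hδ : δ ≤ X ω) => ?_)).trans (measure_union_le _ _)
  show δ / 2 ≤ U ω ∨ δ / 2 ≤ V ω
  by_contra! hc
  linarith

theorem tendsto_measure_setOf_le_atTop [IsFiniteMeasure P] {f : Ω → ℝ} (hf : Measurable f) :
    Tendsto (fun c : ℝ => P {ω | c ≤ f ω}) atTop (𝓝 0) := by
  have hempty : ⋂ c : ℝ, {ω | c ≤ f ω} = ∅ :=
    Set.eq_empty_of_forall_notMem fun ω hω =>
      (lt_irrefl _) ((lt_add_one (f ω)).trans_le (Set.mem_iInter.mp hω (f ω + 1)))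
  simpa [Function.comp_def, hempty] using tendsto_measure_iInter_atTop (μ := P)
    (fun c => (measurableSet_le measurable_const hf).nullMeasurableSet)
    (fun c c' hcc' ω (hω : c' ≤ f ω) => hcc'.trans hω) ⟨0, measure_ne_top P _⟩

namespace TendstoZeroInProbability

variable {X Y : ℕ → Ω → ℝ}

theorem add (hX : TendstoZeroInProbability P X) (hY : TendstoZeroInProbability P Y) :
    TendstoZeroInProbability P fun k ω => X k ω + Y k ω := fun δ hδ =>
  tendsto_of_tendsto_of_tendsto_of_le_of_le tendsto_const_nhds
    (by simpa using (hX _ (half_pos hδ)).add (hY _ (half_pos hδ))) (fun _ => bot_le)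
    fun _ => measure_le_le_add_of_ae_le_add (ae_of_all _ fun _ => le_rfl) δ

theorem finset_sum {ι : Type*} (s : Finset ι) {X : ι → ℕ → Ω → ℝ}
    (h : ∀ i ∈ s, TendstoZeroInProbability P (X i)) :
    TendstoZeroInProbability P fun k ω => ∑ i ∈ s, X i k ω := by
  induction s using Finset.cons_induction with
  | empty => intro δ hδ; simp [not_le.mpr hδ]
  | cons i s _ ih =>
    simp only [Finset.sum_cons]
    exact (h i (Finset.mem_cons_self i s)).add (ih fun j hj => h j (Finset.mem_cons_of_mem hj))

theorem of_ae_tendsto [IsFiniteMeasure P] (hX : ∀ k, AEStronglyMeasurable (X k) P)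
    (h : ∀ᵐ ω ∂P, Tendsto (fun k => X k ω) atTop (𝓝 0)) : TendstoZeroInProbability P X := by
  intro δ hδ
  refine tendsto_of_tendsto_of_tendsto_of_le_of_le tendsto_const_nhds
    (tendstoInMeasure_iff_dist.mp (tendstoInMeasure_of_tendsto_ae hX h) δ hδ)
    (fun _ => bot_le) fun k => measure_mono fun ω hω => ?_
  simpa [Real.dist_eq] using le_abs.mpr (Or.inl hω)

-- The factor `f ∘ T^[k]` has the law of `f` for every `k`, hence is tight.
theorem comp_iterate_mul [IsFiniteMeasure P] {T : Ω → Ω} (hT : MeasurePreserving T P P)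
    {f : Ω → ℝ} (hf : Measurable f) (hX₀ : ∀ k ω, 0 ≤ X k ω) (hX : TendstoZeroInProbability P X) :
    TendstoZeroInProbability P fun k ω => f (T^[k] ω) * X k ω := by
  intro δ hδ
  rw [ENNReal.tendsto_nhds_zero]
  intro ε hε
  have hε2 : 0 < ε / 2 := ENNReal.half_pos hε.ne'
  obtain ⟨c, hcf, hc⟩ := ((ENNReal.tendsto_nhds_zero.mp (tendsto_measure_setOf_le_atTop (P := P) hf)
    (ε / 2) hε2).and (eventually_gt_atTop 0)).exists
  filter_upwards [ENNReal.tendsto_nhds_zero.mp (hX (δ / c) (by positivity)) (ε / 2) hε2]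
    with k hk
  have hsub : {ω | δ ≤ f (T^[k] ω) * X k ω} ⊆ T^[k] ⁻¹' {ω | c ≤ f ω} ∪ {ω | δ / c ≤ X k ω} := by
    intro ω (hω : δ ≤ _)
    show c ≤ f (T^[k] ω) ∨ δ / c ≤ X k ω
    by_contra! hcon
    exact hω.not_gt <| calc
      f (T^[k] ω) * X k ω ≤ c * X k ω := mul_le_mul_of_nonneg_right hcon.1.le (hX₀ k ω)
      _ < c * (δ / c) := mul_lt_mul_of_pos_left hcon.2 hc
      _ = δ := mul_div_cancel₀ δ hc.ne'
  calc P {ω | δ ≤ f (T^[k] ω) * X k ω}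
      ≤ P (T^[k] ⁻¹' {ω | c ≤ f ω}) + P {ω | δ / c ≤ X k ω} :=
        (measure_mono hsub).trans (measure_union_le _ _)
    _ ≤ ε / 2 + ε / 2 := add_le_add (((hT.iterate k).measure_preimage_le _).trans hcf) hk
    _ = ε := ENNReal.add_halves ε

theorem of_ae_le_add (U V : ℕ → ℕ → Ω → ℝ) (hU : ∀ L, TendstoZeroInProbability P (U L))
    (hle : ∀ L, ∀ᶠ k in atTop, ∀ᵐ ω ∂P, X k ω ≤ U L k ω + V L k ω)
    (hV : ∀ δ : ℝ, 0 < δ → ∃ e : ℕ → ℝ≥0∞, Tendsto e atTop (𝓝 0) ∧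
      ∀ L k, P {ω | δ ≤ V L k ω} ≤ e L) :
    TendstoZeroInProbability P X := by
  intro δ hδ
  obtain ⟨e, he, heV⟩ := hV (δ / 2) (half_pos hδ)
  rw [ENNReal.tendsto_nhds_zero]
  intro ε hε
  have hε2 : 0 < ε / 2 := ENNReal.half_pos hε.ne'
  obtain ⟨L, hL⟩ := (ENNReal.tendsto_nhds_zero.mp he (ε / 2) hε2).exists
  filter_upwards [hle L, ENNReal.tendsto_nhds_zero.mp (hU L (δ / 2) (half_pos hδ)) (ε / 2) hε2]
    with k hk hUk
  calc P {ω | δ ≤ X k ω} ≤ P {ω | δ / 2 ≤ U L k ω} + P {ω | δ / 2 ≤ V L k ω} :=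
        measure_le_le_add_of_ae_le_add hk δ
    _ ≤ ε / 2 + ε / 2 := add_le_add hUk ((heV L k).trans hL)
    _ = ε := ENNReal.add_halves ε

end TendstoZeroInProbability

theorem tendsto_measure_exists_le_sum_Ico [IsFiniteMeasure P] {Z : ℕ → Ω → ℝ}
    (hZ : ∀ m, Measurable (Z m)) (hZ₀ : ∀ m ω, 0 ≤ Z m ω)
    (hsum : ∀ᵐ ω ∂P, Summable fun m => Z m ω) {δ : ℝ} (hδ : 0 < δ) :
    Tendsto (fun L => P {ω | ∃ n, δ ≤ ∑ m ∈ Finset.Ico L n, Z m ω}) atTop (𝓝 0) := by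
  have hmeas : ∀ L, MeasurableSet {ω | ∃ n, δ ≤ ∑ m ∈ Finset.Ico L n, Z m ω} := fun L => by
    simp_rw [Set.ofPred_exists]
    exact .iUnion fun n =>
      measurableSet_le measurable_const (Finset.measurable_sum _ fun m _ => hZ m)
  have hanti : Antitone fun L => {ω | ∃ n, δ ≤ ∑ m ∈ Finset.Ico L n, Z m ω} :=
    fun L L' hLL' ω ⟨n, hn⟩ => ⟨n, hn.trans <| Finset.sum_le_sum_of_subset_of_nonneg
      (Finset.Ico_subset_Ico_left hLL') fun m _ _ => hZ₀ m ω⟩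
  have hnull : P (⋂ L, {ω | ∃ n, δ ≤ ∑ m ∈ Finset.Ico L n, Z m ω}) = 0 := by
    refine measure_mono_null (fun ω hω => ?_) (ae_iff.mp hsum)
    intro (hsω : Summable fun m => Z m ω)
    obtain ⟨L, hL⟩ := ((tendsto_sum_nat_add fun m => Z m ω).eventually_lt_const hδ).exists
    obtain ⟨n, hn⟩ := Set.mem_iInter.mp hω L
    have htail : ∑ m ∈ Finset.Ico L n, Z m ω ≤ ∑' i, Z (i + L) ω := by
      rw [Finset.sum_Ico_eq_sum_range]
      simp_rw [add_comm L]
      exact Summable.sum_le_tsum _ (fun i _ => hZ₀ _ _) ((summable_nat_add_iff L).mpr hsω)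
    linarith
  rw [← hnull]
  exact tendsto_measure_iInter_atTop (fun L => (hmeas L).nullMeasurableSet) hanti
    ⟨0, measure_ne_top P _⟩

end InProbability

theorem summable_exp_mul_of_le_linear {u v : ℕ → ℝ} (hv : ∀ n, 0 ≤ v n) {c₀ c : ℝ}
    (hc₀ : c₀ < 0) (hu : ∀ n, u n ≤ n * c₀ + c)
    (hv_temp : Tendsto (fun n : ℕ => max (Real.log (v n)) 0 / n) atTop (𝓝 0)) :
    Summable fun n => Real.exp (u n) * v n := by
  have hexp : (fun n => Real.exp (u n)) =O[atTop] fun n : ℕ => Real.exp (n * c₀) := by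
    refine IsBigO.of_bound (Real.exp c) (Eventually.of_forall fun n => ?_)
    simp only [Real.norm_eq_abs, Real.abs_exp, ← Real.exp_add]
    exact Real.exp_le_exp.mpr (by linarith [hu n])
  have htemp : v =O[atTop] fun n : ℕ => Real.exp (n * (-c₀ / 2)) := by
    refine IsBigO.of_bound 1 ?_
    filter_upwards [hv_temp.eventually_lt_const (by linarith : (0 : ℝ) < -c₀ / 2),
      eventually_gt_atTop 0] with n hn hn₀
    rw [div_lt_iff₀ (Nat.cast_pos.mpr hn₀)] at hn
    simp only [Real.norm_eq_abs, Real.abs_exp, abs_of_nonneg (hv n), one_mul]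
    calc v n ≤ Real.exp (Real.log (v n)) := Real.le_exp_log _
      _ ≤ Real.exp (n * (-c₀ / 2)) :=
        Real.exp_le_exp.mpr (by linarith [le_max_left (Real.log (v n)) 0])
  refine summable_of_isBigO_nat (Real.summable_exp_nat_mul_iff.mpr (by linarith : c₀ / 2 < 0))
    ((hexp.mul htemp).congr_right fun n => ?_)
  rw [← Real.exp_add]
  ring_nf

section Birkhoff

variable {Ω : Type*} {T : Ω → Ω} {g : Ω → ℝ}

noncomputable def birkhoffMax (T : Ω → Ω) (g : Ω → ℝ) : ℕ → Ω → ℝ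
  | 0 => 0
  | n + 1 => fun ω => max (birkhoffMax T g n ω) (birkhoffSum T g (n + 1) ω)

theorem birkhoffMax_nonneg (n : ℕ) (ω : Ω) : 0 ≤ birkhoffMax T g n ω := by
  induction n with
  | zero => rfl
  | succ n ih => exact le_max_of_le_left ih

theorem monotone_birkhoffMax (ω : Ω) : Monotone fun n => birkhoffMax T g n ω :=
  monotone_nat_of_le_succ fun _ => le_max_left _ _

theorem birkhoffSum_le_birkhoffMax (n : ℕ) (ω : Ω) : birkhoffSum T g n ω ≤ birkhoffMax T g n ω := by
  cases n with
  | zero => rfl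
  | succ n => exact le_max_right _ _

theorem birkhoffMax_le_max_zero_add (n : ℕ) (ω : Ω) :
    birkhoffMax T g n ω ≤ max 0 (g ω + birkhoffMax T g n (T ω)) := by
  induction n generalizing ω with
  | zero => exact le_max_left _ _
  | succ n ih =>
    refine max_le ((ih ω).trans (max_le_max le_rfl ?_)) ?_
    · exact add_le_add le_rfl (monotone_birkhoffMax _ n.le_succ)
    · rw [birkhoffSum_succ']
      exact le_max_of_le_right (add_le_add le_rfl
        ((birkhoffSum_le_birkhoffMax n (T ω)).trans (monotone_birkhoffMax _ n.le_succ)))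

theorem bddAbove_range_birkhoffSum_apply_iff (ω : Ω) :
    BddAbove (Set.range fun n => birkhoffSum T g n (T ω)) ↔
      BddAbove (Set.range fun n => birkhoffSum T g n ω) := by
  constructor
  · rintro ⟨c, hc⟩
    refine ⟨max 0 (g ω + c), Set.forall_mem_range.2 fun n => ?_⟩
    cases n with
    | zero => exact le_max_left _ _
    | succ n =>
      rw [birkhoffSum_succ']
      exact le_max_of_le_right (add_le_add le_rfl (hc (Set.mem_range_self n)))
  · rintro ⟨c, hc⟩
    refine ⟨c - g ω, Set.forall_mem_range.2 fun n => ?_⟩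
    have := hc (Set.mem_range_self (n + 1))
    rw [birkhoffSum_succ'] at this
    linarith

variable [MeasurableSpace Ω] {P : Measure Ω}

theorem measurable_birkhoffSum (hT : Measurable T) (hg : Measurable g) (n : ℕ) :
    Measurable (birkhoffSum T g n) :=
  Finset.measurable_sum _ fun k _ => hg.comp (hT.iterate k)

theorem measurable_birkhoffMax (hT : Measurable T) (hg : Measurable g) (n : ℕ) :
    Measurable (birkhoffMax T g n) := by
  induction n with
  | zero => exact measurable_const
  | succ n ih => exact ih.max (measurable_birkhoffSum hT hg (n + 1))

theorem integrable_birkhoffMax (hT : MeasurePreserving T P P) (hg : Integrable g P) (n : ℕ) :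
    Integrable (birkhoffMax T g n) P := by
  induction n with
  | zero => exact integrable_zero _ _ _
  | succ n ih =>
    exact ih.sup (integrable_finsetSum _ fun k _ => (hT.iterate k).integrable_comp_of_integrable hg)

theorem MeasureTheory.MeasurePreserving.integral_comp_of_aestronglyMeasurable
    (hT : MeasurePreserving T P P) {f : Ω → ℝ} (hf : AEStronglyMeasurable f P) :
    ∫ ω, f (T ω) ∂P = ∫ ω, f ω ∂P := by
  rw [← integral_map hT.aemeasurable (by rwa [hT.map_eq]), hT.map_eq]

/-- The maximal ergodic theorem, by Garsia's argument: `M - M ∘ T ≤ g` on `{0 < M}`. -/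
theorem setIntegral_birkhoffMax_pos_nonneg (hT : MeasurePreserving T P P) (hg : Measurable g)
    (hgi : Integrable g P) (n : ℕ) : 0 ≤ ∫ ω in {ω | 0 < birkhoffMax T g n ω}, g ω ∂P := by
  set M := birkhoffMax T g n
  set A := {ω | 0 < M ω}
  have hM : Integrable M P := integrable_birkhoffMax hT hgi n
  have hMT : Integrable (M ∘ T) P := hT.integrable_comp_of_integrable hM
  have hA : MeasurableSet A :=
    measurableSet_lt measurable_const (measurable_birkhoffMax hT.measurable hg n)
  have hpt : ∀ ω ∈ A, M ω - M (T ω) ≤ g ω := fun ω (hω : 0 < M ω) => by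
    have := birkhoffMax_le_max_zero_add (T := T) (g := g) n ω
    rw [max_eq_right (by by_contra! h; rw [max_eq_left h.le] at this; linarith)] at this
    linarith
  have hMA : ∫ ω in A, M ω ∂P = ∫ ω, M ω ∂P :=
    setIntegral_eq_integral_of_forall_compl_eq_zero fun ω (hω : ¬ 0 < M ω) =>
      le_antisymm (not_lt.mp hω) (birkhoffMax_nonneg n ω)
  have hMTA : ∫ ω in A, M (T ω) ∂P ≤ ∫ ω, M (T ω) ∂P :=
    setIntegral_le_integral hMT (ae_of_all _ fun ω => birkhoffMax_nonneg n (T ω))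
  have hinv : ∫ ω, M (T ω) ∂P = ∫ ω, M ω ∂P := hT.integral_comp_of_aestronglyMeasurable hM.1
  calc 0 = ∫ ω in A, M ω ∂P - ∫ ω, M (T ω) ∂P := by rw [hMA, hinv, sub_self]
    _ ≤ ∫ ω in A, M ω ∂P - ∫ ω in A, M (T ω) ∂P := by linarith
    _ = ∫ ω in A, (M ω - M (T ω)) ∂P := (integral_sub hM.integrableOn hMT.integrableOn).symm
    _ ≤ ∫ ω in A, g ω ∂P := setIntegral_mono_on (hM.sub hMT).integrableOn hgi.integrableOn hA hpt

theorem Ergodic.ae_bddAbove_birkhoffSum [IsProbabilityMeasure P] (hT : Ergodic T P)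
    (hg : Measurable g) (hgi : Integrable g P) (hneg : ∫ ω, g ω ∂P < 0) :
    ∀ᵐ ω ∂P, BddAbove (Set.range fun n => birkhoffSum T g n ω) := by
  -- If the invariant set of bounded orbits were null, the sets `{0 < birkhoffMax T g n}` would
  -- exhaust `Ω` and the maximal ergodic theorem would give `0 ≤ ∫ g`.
  set C := {ω | BddAbove (Set.range fun n => birkhoffSum T g n ω)}
  have hC : MeasurableSet C :=
    measurableSet_bddAbove_range (measurable_birkhoffSum hT.measurable hg)
  have hCinv : T ⁻¹' C = C := Set.ext bddAbove_range_birkhoffSum_apply_iff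
  refine (hT.measure_self_or_compl_eq_zero hC hCinv).resolve_left fun hC0 => hneg.not_ge ?_
  set A : ℕ → Set Ω := fun n => {ω | 0 < birkhoffMax T g n ω}
  have hA : ∀ n, MeasurableSet (A n) := fun n =>
    measurableSet_lt measurable_const (measurable_birkhoffMax hT.measurable hg n)
  have hAmono : Monotone A := fun n n' hnn' ω (hω : 0 < _) =>
    hω.trans_le (monotone_birkhoffMax ω hnn')
  have hAall : ∀ᵐ ω ∂P, ω ∈ ⋃ n, A n := by
    filter_upwards [measure_eq_zero_iff_ae_notMem.mp hC0] with ω hω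
    obtain ⟨_, ⟨n, rfl⟩, hpos⟩ := not_bddAbove_iff.mp hω 0
    exact Set.mem_iUnion.2 ⟨n, hpos.trans_le (birkhoffSum_le_birkhoffMax n ω)⟩
  rw [← Measure.restrict_eq_self_of_ae_mem hAall]
  exact ge_of_tendsto' (tendsto_setIntegral_of_monotone hA hAmono hgi.integrableOn)
    (setIntegral_birkhoffMax_pos_nonneg hT.toMeasurePreserving hg hgi)

theorem Ergodic.ae_exists_birkhoffSum_le [IsProbabilityMeasure P] (hT : Ergodic T P)
    (hg : Measurable g) (hgi : Integrable g P) {c₀ : ℝ} (hc₀ : ∫ ω, g ω ∂P < c₀) :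
    ∀ᵐ ω ∂P, ∃ c, ∀ n : ℕ, birkhoffSum T g n ω ≤ n * c₀ + c := by
  have hsub : ∀ n ω, birkhoffSum T (g - fun _ => c₀) n ω = birkhoffSum T g n ω - n * c₀ := by
    intro n ω
    simp [birkhoffSum, Finset.sum_sub_distrib]
  filter_upwards [hT.ae_bddAbove_birkhoffSum (hg.sub measurable_const)
    (hgi.sub (integrable_const c₀)) (by simpa [integral_sub hgi (integrable_const c₀)])]
    with ω ⟨c, hc⟩
  refine ⟨c, fun n => ?_⟩
  have := hc (Set.mem_range_self n)
  rw [hsub] at this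
  linarith

end Birkhoff

section Backward

variable {Ω : Type*} {T S : Ω → Ω}

theorem iterate_apply_iterate_of_leftInverse (hST : Function.LeftInverse S T) {n k : ℕ}
    (hnk : n ≤ k) (ω : Ω) : S^[n] (T^[k] ω) = T^[k - n] ω := by
  rw [← Nat.add_sub_of_le hnk, Function.iterate_add_apply, (hST.iterate n) _,
    Nat.add_sub_cancel_left]

theorem sum_Ico_sub_eq_birkhoffSum (hST : Function.LeftInverse S T) (Q : Ω → ℝ) {n k : ℕ}
    (hnk : n ≤ k) (ω : Ω) :
    ∑ j ∈ Finset.Ico (k - n) k, Q (T^[j] ω) = birkhoffSum S (Q ∘ S) n (T^[k] ω) := by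
  induction n with
  | zero => simp
  | succ n ih =>
    rw [Finset.sum_eq_sum_Ico_succ_bot (by omega), show k - (n + 1) + 1 = k - n by omega,
      ih (by omega), birkhoffSum_succ, Function.comp_apply, ← Function.iterate_succ_apply' S,
      iterate_apply_iterate_of_leftInverse hST hnk, add_comm]

/-- With `ω = T^[k] ω₀`, the noise `η (k - (m + 1)) ω₀` injected `m + 1` steps in the past reaches
the present with weight `exp (birkhoffSum S (Q ∘ S) (m + 1) ω)` and is at most `b (S^[m + 1] ω)`. -/
noncomputable def pastNoiseBound (S : Ω → Ω) (Q b : Ω → ℝ) (m : ℕ) (ω : Ω) : ℝ :=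
  Real.exp (birkhoffSum S (Q ∘ S) (m + 1) ω) * b (S^[m + 1] ω)

theorem sum_exp_sum_Ico_mul_le (hST : Function.LeftInverse S T) (Q : Ω → ℝ) {b : Ω → ℝ}
    {η : ℕ → Ω → ℝ} (hηb : ∀ j ω, η j ω ≤ b (T^[j] ω)) {L k : ℕ} (hLk : L ≤ k) (ω : Ω) :
    ∑ j ∈ Finset.range k, Real.exp (∑ j' ∈ Finset.Ico j k, Q (T^[j'] ω)) * η j ω ≤
      ∑ m ∈ Finset.range L, Real.exp (birkhoffSum S (Q ∘ S) (m + 1) (T^[k] ω)) * η (k - (m + 1)) ω +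
        ∑ m ∈ Finset.Ico L k, pastNoiseBound S Q b m (T^[k] ω) := by
  have hreflect : ∑ j ∈ Finset.range k, Real.exp (∑ j' ∈ Finset.Ico j k, Q (T^[j'] ω)) * η j ω =
      ∑ m ∈ Finset.range k,
        Real.exp (birkhoffSum S (Q ∘ S) (m + 1) (T^[k] ω)) * η (k - (m + 1)) ω :=
    (Finset.sum_range_reflect _ k).symm.trans <| Finset.sum_congr rfl fun m hm => by
      rw [Nat.sub_sub, add_comm 1 m, sum_Ico_sub_eq_birkhoffSum hST Q (Finset.mem_range.mp hm) ω]
  rw [hreflect, ← Finset.sum_range_add_sum_Ico _ hLk]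
  refine add_le_add le_rfl (Finset.sum_le_sum fun m hm =>
    mul_le_mul_of_nonneg_left ?_ (Real.exp_nonneg _))
  rw [iterate_apply_iterate_of_leftInverse hST (Finset.mem_Ico.mp hm).2 ω]
  exact hηb _ _

end Backward

section Stability

variable {Ω : Type*} [MeasurableSpace Ω] {P : Measure Ω} {T S : Ω → Ω} {Q b : Ω → ℝ}

theorem Ergodic.of_leftInverse (hT : Ergodic T P) (hS : MeasurePreserving S P P)
    (hST : Function.LeftInverse S T) : Ergodic S P :=
  ⟨hS, ⟨fun s hs hinv => hT.aeconst_set hs <| by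
    conv_lhs => rw [← hinv, ← Set.preimage_comp, hST.comp_eq_id, Set.preimage_id]⟩⟩

theorem measurable_pastNoiseBound (hS : Measurable S) (hQ : Measurable Q) (hb : Measurable b)
    (m : ℕ) : Measurable (pastNoiseBound S Q b m) :=
  (measurable_birkhoffSum hS (hQ.comp hS) (m + 1)).exp.mul (hb.comp (hS.iterate (m + 1)))

theorem ae_summable_pastNoiseBound [IsProbabilityMeasure P] (hS : Ergodic S P)
    (hQ : Measurable Q) (hQi : Integrable Q P) (hEQ : ∫ ω, Q ω ∂P < 0) (hb₀ : ∀ ω, 0 ≤ b ω)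
    (hb_temp : ∀ᵐ ω ∂P, Tendsto (fun n : ℕ => max (Real.log (b (S^[n] ω))) 0 / n) atTop (𝓝 0)) :
    ∀ᵐ ω ∂P, Summable fun m => pastNoiseBound S Q b m ω := by
  have hint : ∫ ω, (Q ∘ S) ω ∂P = ∫ ω, Q ω ∂P :=
    hS.toMeasurePreserving.integral_comp_of_aestronglyMeasurable hQi.1
  filter_upwards [hS.ae_exists_birkhoffSum_le (hQ.comp hS.measurable)
    (hS.integrable_comp_of_integrable hQi) (by linarith : ∫ ω, (Q ∘ S) ω ∂P < (∫ ω, Q ω ∂P) / 2),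
    hb_temp] with ω ⟨c, hc⟩ htemp
  exact (summable_nat_add_iff 1).mpr
    (summable_exp_mul_of_le_linear (fun n => hb₀ _) (by linarith) hc htemp)

theorem tendstoZeroInProbability_mul_exp_birkhoffSum [IsProbabilityMeasure P] (hT : Ergodic T P)
    (hQ : Measurable Q) (hQi : Integrable Q P) (hEQ : ∫ ω, Q ω ∂P < 0) {Y : Ω → ℝ}
    (hY : Measurable Y) :
    TendstoZeroInProbability P fun k ω => Y ω * Real.exp (birkhoffSum T Q k ω) := by
  refine .of_ae_tendsto (fun k =>
    (hY.mul (measurable_birkhoffSum hT.measurable hQ k).exp).aestronglyMeasurable) ?_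
  filter_upwards [hT.ae_exists_birkhoffSum_le hQ hQi
    (by linarith : ∫ ω, Q ω ∂P < (∫ ω, Q ω ∂P) / 2)] with ω ⟨c, hc⟩
  have hdrift : Tendsto (fun k => birkhoffSum T Q k ω) atTop atBot :=
    tendsto_atBot_mono hc <| tendsto_atBot_add_const_right _ c <|
      tendsto_natCast_atTop_atTop.atTop_mul_const_of_neg (by linarith)
  simpa using (Real.tendsto_exp_atBot.comp hdrift).const_mul (Y ω)

theorem tendstoZeroInProbability_of_le_window_sum [IsProbabilityMeasure P]
    (hST : Function.LeftInverse S T) (hT : Ergodic T P) (hS : MeasurePreserving S P P)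
    (hQ : Measurable Q) (hQi : Integrable Q P) (hEQ : ∫ ω, Q ω ∂P < 0)
    (hb : Measurable b) (hb₀ : ∀ ω, 0 ≤ b ω)
    (hb_temp : ∀ᵐ ω ∂P, Tendsto (fun n : ℕ => max (Real.log (b (S^[n] ω))) 0 / n) atTop (𝓝 0))
    {y η : ℕ → Ω → ℝ} (hy₀ : Measurable (y 0)) (hη₀ : ∀ j ω, 0 ≤ η j ω)
    (hηb : ∀ j ω, η j ω ≤ b (T^[j] ω)) (hη : TendstoZeroInProbability P η)
    (hy : ∀ k, 1 ≤ k → ∀ᵐ ω ∂P, y k ω ≤ y 0 ω * Real.exp (birkhoffSum T Q k ω) +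
      ∑ j ∈ Finset.range k, Real.exp (∑ j' ∈ Finset.Ico j k, Q (T^[j'] ω)) * η j ω) :
    TendstoZeroInProbability P y := by
  have hrecent : ∀ L, TendstoZeroInProbability P fun k ω => ∑ m ∈ Finset.range L,
      Real.exp (birkhoffSum S (Q ∘ S) (m + 1) (T^[k] ω)) * η (k - (m + 1)) ω := fun L =>
    .finset_sum _ fun m _ => .comp_iterate_mul hT.toMeasurePreserving
      (measurable_birkhoffSum hS.measurable (hQ.comp hS.measurable) (m + 1)).exp
      (fun _ _ => hη₀ _ _) fun δ hδ => (hη δ hδ).comp (tendsto_sub_atTop_nat (m + 1))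
  -- Split the noise at lag `L`: the lags `m < L` tend to zero in probability for fixed `L`; the
  -- older ones are bounded by a tail of `pastNoiseBound` at `T^[k] ω`, whose law is that at `ω`.
  refine .of_ae_le_add
    (fun L k ω => y 0 ω * Real.exp (birkhoffSum T Q k ω) + ∑ m ∈ Finset.range L,
      Real.exp (birkhoffSum S (Q ∘ S) (m + 1) (T^[k] ω)) * η (k - (m + 1)) ω)
    (fun L k ω => ∑ m ∈ Finset.Ico L k, pastNoiseBound S Q b m (T^[k] ω))
    (fun L => (tendstoZeroInProbability_mul_exp_birkhoffSum hT hQ hQi hEQ hy₀).add (hrecent L))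
    (fun L => ?_) fun δ hδ => ?_
  · filter_upwards [eventually_ge_atTop (max L 1)] with k hk
    filter_upwards [hy k (le_of_max_le_right hk)] with ω hω
    linarith [sum_exp_sum_Ico_mul_le hST Q hηb (le_of_max_le_left hk) ω]
  · refine ⟨_, tendsto_measure_exists_le_sum_Ico (measurable_pastNoiseBound hS.measurable hQ hb)
      (fun m ω => mul_nonneg (Real.exp_nonneg _) (hb₀ _))
      (ae_summable_pastNoiseBound (hT.of_leftInverse hS hST) hQ hQi hEQ hb₀ hb_temp) hδ,
      fun L k => ?_⟩
    exact (measure_mono fun ω (hω : δ ≤ _) =>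
      (show ∃ n, δ ≤ ∑ m ∈ Finset.Ico L n, pastNoiseBound S Q b m (T^[k] ω) from ⟨k, hω⟩)).trans
      ((hT.toMeasurePreserving.iterate k).measure_preimage_le _)

end Stability

theorem stmt_4_general {Ω : Type*} [MeasurableSpace Ω] (P : Measure Ω) [IsProbabilityMeasure P]
    (T S : Ω → Ω) (hST : ∀ ω, S (T ω) = ω)
    (hT : Ergodic T P) (hS : MeasurePreserving S P P)
    (Q : Ω → ℝ) (hQ : Integrable Q P) (hEQ : ∫ ω, Q ω ∂P < 0)
    (b : Ω → ℝ) (hb_meas : Measurable b) (hb_nonneg : ∀ ω, 0 ≤ b ω)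
    (hb_temp : ∀ᵐ ω ∂P,
      Tendsto (fun n : ℕ => max (Real.log (b (T^[n] ω))) 0 / (n : ℝ)) atTop (nhds 0) ∧
      Tendsto (fun n : ℕ => max (Real.log (b (S^[n] ω))) 0 / (n : ℝ)) atTop (nhds 0))
    (y η : ℕ → Ω → ℝ)
    (hy_meas : ∀ k, Measurable (y k))
    (hη_nonneg : ∀ j ω, 0 ≤ η j ω)
    (hi : ∀ j ω, η j ω ≤ b (T^[j] ω))
    (hii : ∀ δ : ℝ, 0 < δ →
      Tendsto (fun j : ℕ => P {ω | δ ≤ η j ω}) atTop (nhds 0))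
    (hiii : ∀ k : ℕ, 1 ≤ k → ∀ᵐ ω ∂P,
      y k ω ≤ y 0 ω * Real.exp (∑ j ∈ Finset.range k, Q (T^[j] ω)) +
        ∑ j ∈ Finset.range k,
          Real.exp (∑ j' ∈ Finset.Ico j k, Q (T^[j'] ω)) * η j ω) :
    ∀ δ : ℝ, 0 < δ →
      Tendsto (fun k : ℕ => P {ω | δ ≤ y k ω}) atTop (nhds 0) := by
  obtain ⟨Q', hQ', hQQ'⟩ := hQ.aemeasurable
  have horbit : ∀ᵐ ω ∂P, ∀ n, Q (T^[n] ω) = Q' (T^[n] ω) := ae_all_iff.mpr fun n =>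
    (hT.toMeasurePreserving.iterate n).quasiMeasurePreserving.ae_eq hQQ'
  refine tendstoZeroInProbability_of_le_window_sum hST hT hS hQ' (hQ.congr hQQ')
    (by rwa [← integral_congr_ae hQQ']) hb_meas hb_nonneg (hb_temp.mono fun _ h => h.2)
    (hy_meas 0) hη_nonneg hi hii fun k hk => ?_
  filter_upwards [hiii k hk, horbit] with ω hω hQω
  simpa only [birkhoffSum, hQω] using hω

/-- Let `(Ω, F, P)` be a probability space and `T : Ω → Ω` invertible (with inverse `S`)
with `T`, `S` measurable and measure-preserving and `T` ergodic. Let `Q : Ω → ℝ` be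
integrable with `E[Q] < 0`, and `b : Ω → [0,∞)` measurable and tempered
(`log⁺ b(T^n ω)/|n| → 0` as `n → ±∞` a.s.). Let `y k, η j : Ω → [0,∞)` be measurable
with (i) `η j ω ≤ b (T^[j] ω)`; (ii) `η j → 0` in probability;
(iii) for every `k ≥ 1`, a.s.
`y k ω ≤ y 0 ω · exp (∑_{j<k} Q(T^[j]ω)) + ∑_{j<k} exp (∑_{j'=j}^{k−1} Q(T^[j']ω)) · η j ω`.
Then `y k → 0` in probability as `k → ∞`. -/
theorem stmt_4 {Ω : Type*} [MeasurableSpace Ω] (P : Measure Ω) [IsProbabilityMeasure P]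
    (T S : Ω → Ω) (hST : ∀ ω, S (T ω) = ω) (hTS : ∀ ω, T (S ω) = ω)
    (hT : Ergodic T P) (hS : MeasurePreserving S P P)
    (Q : Ω → ℝ) (hQ : Integrable Q P) (hEQ : ∫ ω, Q ω ∂P < 0)
    (b : Ω → ℝ) (hb_meas : Measurable b) (hb_nonneg : ∀ ω, 0 ≤ b ω)
    (hb_temp : ∀ᵐ ω ∂P,
      Tendsto (fun n : ℕ => max (Real.log (b (T^[n] ω))) 0 / (n : ℝ)) atTop (nhds 0) ∧
      Tendsto (fun n : ℕ => max (Real.log (b (S^[n] ω))) 0 / (n : ℝ)) atTop (nhds 0))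
    (y η : ℕ → Ω → ℝ)
    (hy_meas : ∀ k, Measurable (y k)) (hη_meas : ∀ j, Measurable (η j))
    (hy_nonneg : ∀ k ω, 0 ≤ y k ω) (hη_nonneg : ∀ j ω, 0 ≤ η j ω)
    (hi : ∀ j ω, η j ω ≤ b (T^[j] ω))
    (hii : ∀ δ : ℝ, 0 < δ →
      Tendsto (fun j : ℕ => P {ω | δ ≤ η j ω}) atTop (nhds 0))
    (hiii : ∀ k : ℕ, 1 ≤ k → ∀ᵐ ω ∂P,
      y k ω ≤ y 0 ω * Real.exp (∑ j ∈ Finset.range k, Q (T^[j] ω)) +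
        ∑ j ∈ Finset.range k,
          Real.exp (∑ j' ∈ Finset.Ico j k, Q (T^[j'] ω)) * η j ω) :
    ∀ δ : ℝ, 0 < δ →
      Tendsto (fun k : ℕ => P {ω | δ ≤ y k ω}) atTop (nhds 0) :=
  stmt_4_general P T S hST hT hS Q hQ hEQ b hb_meas hb_nonneg hb_temp y η hy_meas hη_nonneg hi hii
    hiii
end

section
/- Let H and W be real normed spaces and e : H → W an injective continuous linear map. Let l_1, …, l_k be linearly independent continuous linear functionals on H with completeness defect ε := sup { ‖e w‖_W : w ∈ H, ‖w‖_H ≤ 1, l_j(w) = 0 for all j }. Let P : W → H be a continuous linear map and a₀ > 0 a constant with ‖P x‖_H ≤ a₀ ‖x‖_W for all x ∈ W, and assume 2 a₀ ε < 1. Then there exists a constant C ≥ 0 such that: for every ρ ≥ 0 and all u, v ∈ H satisfying ‖v‖_H ≤ 2 ‖P (e v)‖_H + ρ ‖u‖_H, one has ‖v‖_H ≤ (C / (1 − 2a₀ε)) · max_{1≤j≤k} |l_j(v)| + (ρ / (1 − 2a₀ε)) · ‖u‖_H. -/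
/-- Let `H`, `W` be real normed spaces and `e : H → W` an injective continuous linear map.
Let `l 1, …, l k` be linearly independent continuous linear functionals on `H` with
completeness defect `ε := sup { ‖e w‖_W : ‖w‖_H ≤ 1, l j w = 0 ∀ j }`. Let
`P : W → H` be continuous linear with `‖P x‖ ≤ a₀ ‖x‖_W` and `2 a₀ ε < 1`. Then there
is `C ≥ 0` such that for every `ρ ≥ 0` and all `u, v : H` with
`‖v‖ ≤ 2 ‖P (e v)‖ + ρ ‖u‖` one has
`‖v‖ ≤ (C / (1 − 2a₀ε)) · max_j |l j v| + (ρ / (1 − 2a₀ε)) · ‖u‖`. -/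
theorem stmt_7 {H W : Type*} [NormedAddCommGroup H] [NormedSpace ℝ H]
    [NormedAddCommGroup W] [NormedSpace ℝ W]
    (e : H →L[ℝ] W) (he : Function.Injective e)
    {k : ℕ} (hk : 0 < k) (l : Fin k → H →L[ℝ] ℝ)
    (hl : LinearIndependent ℝ l)
    (ε : ℝ)
    (hε : ε = sSup {r : ℝ | ∃ w : H, ‖w‖ ≤ 1 ∧ (∀ j, l j w = 0) ∧ r = ‖e w‖})
    (Pr : W →L[ℝ] H) (a₀ : ℝ) (ha₀ : 0 < a₀)
    (hPr : ∀ x : W, ‖Pr x‖ ≤ a₀ * ‖x‖)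
    (hsmall : 2 * a₀ * ε < 1) :
    ∃ C : ℝ, 0 ≤ C ∧ ∀ ρ : ℝ, 0 ≤ ρ → ∀ u v : H,
      ‖v‖ ≤ 2 * ‖Pr (e v)‖ + ρ * ‖u‖ →
      ‖v‖ ≤ (C / (1 - 2 * a₀ * ε)) * (⨆ j, |l j v|)
          + (ρ / (1 - 2 * a₀ * ε)) * ‖u‖ := by
  classical
  -- biorthogonal family
  set T : H →ₗ[ℝ] (Fin k → ℝ) := LinearMap.pi (fun j => (l j).toLinearMap) with hT
  have hsurj : Function.Surjective T := by
    rw [← LinearMap.range_eq_top]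
    by_contra hne
    obtain ⟨φ, hφ0, hφ⟩ := Submodule.exists_dual_map_eq_bot_of_lt_top
      (lt_top_iff_ne_top.mpr hne) inferInstance
    have hker : ∀ v : H, φ (T v) = 0 := by
      intro v
      have : φ (T v) ∈ Submodule.map φ (LinearMap.range T) :=
        Submodule.mem_map_of_mem (LinearMap.mem_range_self T v)
      rwa [hφ, Submodule.mem_bot] at this
    set c : Fin k → ℝ := fun j => φ (fun i => if j = i then 1 else 0) with hc
    have hexp : ∀ v : H, ∑ j, c j * l j v = 0 := by
      intro v
      have h1 : T v = ∑ j, (l j v) • fun i => if j = i then (1:ℝ) else 0 := by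
        simpa [hT] using pi_eq_sum_univ (T v)
      have := hker v
      rw [h1, map_sum] at this
      simpa [hc, map_smul, smul_eq_mul, mul_comm] using this
    have hcz : ∀ j, c j = 0 := by
      refine Fintype.linearIndependent_iff.mp hl c ?_
      ext v
      simpa using hexp v
    apply hφ0
    apply LinearMap.ext; intro x
    have h1 : x = ∑ j, x j • fun i => if j = i then (1:ℝ) else 0 := pi_eq_sum_univ x
    rw [h1, map_sum]
    refine Finset.sum_eq_zero fun j _ => ?_
    rw [map_smul, smul_eq_mul,
      show (φ fun i => if j = i then (1:ℝ) else 0) = c j from rfl, hcz, mul_zero]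
  choose w hw using fun j => hsurj (Pi.single j 1)
  have hbio : ∀ i j, l i (w j) = if i = j then 1 else 0 := by
    intro i j
    have := congrFun (hw j) i
    simpa [hT, Pi.single_apply] using this
  -- properties of ε
  have hS0 : (0:ℝ) ∈ {r : ℝ | ∃ w : H, ‖w‖ ≤ 1 ∧ (∀ j, l j w = 0) ∧ r = ‖e w‖} :=
    ⟨0, by simp⟩
  have hSbdd : BddAbove {r : ℝ | ∃ w : H, ‖w‖ ≤ 1 ∧ (∀ j, l j w = 0) ∧ r = ‖e w‖} := by
    refine ⟨‖e‖, ?_⟩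
    rintro r ⟨x, hx, -, rfl⟩
    calc ‖e x‖ ≤ ‖e‖ * ‖x‖ := e.le_opNorm x
      _ ≤ ‖e‖ * 1 := by gcongr
      _ = ‖e‖ := mul_one _
  have hε0 : 0 ≤ ε := hε ▸ le_csSup hSbdd hS0
  have hkerε : ∀ z : H, (∀ j, l j z = 0) → ‖e z‖ ≤ ε * ‖z‖ := by
    intro z hz
    rcases eq_or_ne z 0 with rfl | hz0
    · simp
    · have hmem : ‖e (‖z‖⁻¹ • z)‖ ∈
          {r : ℝ | ∃ w : H, ‖w‖ ≤ 1 ∧ (∀ j, l j w = 0) ∧ r = ‖e w‖} := by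
        refine ⟨‖z‖⁻¹ • z, ?_, fun j => by simp [hz j], rfl⟩
        have : ‖(‖z‖:ℝ)⁻¹ • z‖ = 1 := norm_smul_inv_norm (𝕜 := ℝ) hz0
        simp [this]
      have hle : ‖e (‖z‖⁻¹ • z)‖ ≤ ε := hε ▸ le_csSup hSbdd hmem
      have hzpos : 0 < ‖z‖ := norm_pos_iff.mpr hz0
      rw [map_smul, norm_smul, norm_inv, norm_norm] at hle
      calc ‖e z‖ = ‖z‖ * (‖z‖⁻¹ * ‖e z‖) := by field_simp
        _ ≤ ‖z‖ * ε := by gcongr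
        _ = ε * ‖z‖ := mul_comm _ _
  -- constants
  set B : ℝ := ∑ j, ‖w j‖ with hB
  have hB0 : 0 ≤ B := Finset.sum_nonneg fun j _ => norm_nonneg _
  set d : ℝ := 1 - 2 * a₀ * ε with hd
  have hd0 : 0 < d := by linarith
  refine ⟨(2 * a₀ * ε + 2 * a₀ * ‖e‖) * B, by positivity, ?_⟩
  intro ρ hρ u v hv
  set M : ℝ := ⨆ j, |l j v| with hM
  have hMle : ∀ j, |l j v| ≤ M := fun j =>
    le_ciSup (f := fun j => |l j v|) (Finite.bddAbove_range _) j
  have hM0 : 0 ≤ M := le_trans (abs_nonneg _) (hMle ⟨0, hk⟩)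
  set s : H := ∑ j, (l j v) • w j with hs
  have hls : ∀ i, l i s = l i v := by
    intro i
    rw [hs, map_sum]
    rw [Finset.sum_eq_single i]
    · simp [hbio]
    · intro b _ hb
      simp [hbio, Ne.symm hb]
    · intro h; exact absurd (Finset.mem_univ i) h
  have hsz : ∀ i, l i (v - s) = 0 := by intro i; simp [hls i]
  have hsnorm : ‖s‖ ≤ M * B := by
    calc ‖s‖ ≤ ∑ j, ‖(l j v) • w j‖ := norm_sum_le _ _
      _ = ∑ j, |l j v| * ‖w j‖ := by simp [norm_smul]
      _ ≤ ∑ j, M * ‖w j‖ := by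
          refine Finset.sum_le_sum fun j _ => ?_
          exact mul_le_mul_of_nonneg_right (hMle j) (norm_nonneg _)
      _ = M * B := by rw [hB, Finset.mul_sum]
  have hz : ‖v - s‖ ≤ ‖v‖ + M * B := by
    calc ‖v - s‖ ≤ ‖v‖ + ‖s‖ := norm_sub_le _ _
      _ ≤ ‖v‖ + M * B := by linarith
  have hPrv : ‖Pr (e v)‖ ≤ a₀ * ε * (‖v‖ + M * B) + a₀ * ‖e‖ * (M * B) := by
    have h1 : e v = e (v - s) + e s := by rw [← map_add]; congr 1; abel
    calc ‖Pr (e v)‖ = ‖Pr (e (v - s)) + Pr (e s)‖ := by rw [h1, map_add]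
      _ ≤ ‖Pr (e (v - s))‖ + ‖Pr (e s)‖ := norm_add_le _ _
      _ ≤ a₀ * ‖e (v - s)‖ + a₀ * ‖e s‖ := add_le_add (hPr _) (hPr _)
      _ ≤ a₀ * (ε * ‖v - s‖) + a₀ * (‖e‖ * ‖s‖) := by
          gcongr
          · exact hkerε _ hsz
          · exact e.le_opNorm s
      _ ≤ a₀ * (ε * (‖v‖ + M * B)) + a₀ * (‖e‖ * (M * B)) := by
          gcongr
      _ = a₀ * ε * (‖v‖ + M * B) + a₀ * ‖e‖ * (M * B) := by ring
  have hkey : d * ‖v‖ ≤ (2 * a₀ * ε + 2 * a₀ * ‖e‖) * B * M + ρ * ‖u‖ := by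
    rw [hd]
    nlinarith [hPrv, hv]
  have hfinal : ‖v‖ ≤ ((2 * a₀ * ε + 2 * a₀ * ‖e‖) * B * M + ρ * ‖u‖) / d := by
    rw [le_div_iff₀ hd0]
    linarith [hkey]
  calc ‖v‖ ≤ ((2 * a₀ * ε + 2 * a₀ * ‖e‖) * B * M + ρ * ‖u‖) / d := hfinal
    _ = ((2 * a₀ * ε + 2 * a₀ * ‖e‖) * B) / d * M + ρ / d * ‖u‖ := by
        field_simp
end

section
/- Let H be a Polish metric space with distance d, (Ω, F, P) a probability space, and for each t ≥ 0 let σ_t : Ω → Ω be a measurable measure-preserving map. Let g : Ω × H → H be jointly measurable and such that x ↦ g(ω, x) is continuous for every ω. Let u_t, v_t : Ω → H (t ≥ 0) be measurable. Assume: (i) for every ε > 0 there exist a compact set K ⊆ H and t_ε ≥ 0 such that for all t ≥ t_ε, P( u_t ∈ K and v_t ∈ K ) ≥ 1 − ε; (ii) d(u_t, v_t) → 0 in probability as t → ∞. Then d( g(σ_t ω, u_t(ω)), g(σ_t ω, v_t(ω)) ) → 0 in probability as t → ∞. -/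
open MeasureTheory Filter Topology
open scoped ENNReal

/-!
On a compact set `K` each `g ω` is uniformly continuous, so the event that `g ω` moves some pair
of `η`-close points of `K` by at least `δ` decreases to the empty set as `η → 0`; fix `η` so that
this event has small probability. Since `σ t` preserves `P`, the same bound holds for its
preimage under `σ t`, uniformly in `t`. Outside that preimage, the difference of the conjugated
trajectories can only be `≥ δ` if `dist (u t) (v t) ≥ η`, or if `u t` or `v t` leaves `K`, and
both have small probability for large `t`.
-/

section Measurability

variable {Ω X : Type*} [MeasurableSpace Ω] [TopologicalSpace X]
  [TopologicalSpace.PseudoMetrizableSpace X]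

/-- The supremum over `S` is attained, hence it is also approached along a countable dense
subset of `S`. -/
theorem measurableSet_exists_le_of_isCompact {S : Set X} (hS : IsCompact S) {f : Ω → X → ℝ}
    (hf_meas : ∀ x, Measurable fun ω => f ω x) (hf_cont : ∀ ω, ContinuousOn (f ω) S) (c : ℝ) :
    MeasurableSet {ω | ∃ x ∈ S, c ≤ f ω x} := by
  obtain ⟨D, hDS, hDc, hSD⟩ := hS.isSeparable.exists_countable_dense_subset
  have hchar : {ω | ∃ x ∈ S, c ≤ f ω x} =
      ⋂ k : ℕ, ⋃ d ∈ D, {ω | c - 1 / ((k : ℝ) + 1) < f ω d} := by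
    ext ω
    simp only [Set.mem_ofPred_eq, Set.mem_iInter, Set.mem_iUnion, exists_prop]
    constructor
    · rintro ⟨x, hxS, hcx⟩ k
      have hnear : ∀ᶠ y in 𝓝[S] x, c - 1 / ((k : ℝ) + 1) < f ω y :=
        (hf_cont ω x hxS).eventually
          (lt_mem_nhds (by linarith [Nat.one_div_pos_of_nat (α := ℝ) (n := k)]))
      have : (𝓝[D] x).NeBot := mem_closure_iff_nhdsWithin_neBot.mp (hSD hxS)
      exact ((hnear.filter_mono (nhdsWithin_mono x hDS)).and self_mem_nhdsWithin).exists.imp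
        fun d hd => ⟨hd.2, hd.1⟩
    · intro h
      obtain ⟨d₀, hd₀D, -⟩ := h 0
      obtain ⟨x, hxS, hmax⟩ := hS.exists_isMaxOn ⟨d₀, hDS hd₀D⟩ (hf_cont ω)
      refine ⟨x, hxS, le_of_forall_pos_lt_add fun ε hε => ?_⟩
      obtain ⟨k, hk⟩ := exists_nat_one_div_lt hε
      obtain ⟨d, hdD, hd⟩ := h k
      linarith [isMaxOn_iff.mp hmax d (hDS hdD)]
  rw [hchar]
  exact .iInter fun k => .biUnion hDc fun d _ => measurableSet_lt measurable_const (hf_meas d)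

end Measurability

section Oscillation

variable {Ω X Y : Type*} [PseudoMetricSpace X] [PseudoMetricSpace Y]

def oscillationEvent (g : Ω → X → Y) (K : Set X) (η δ : ℝ) : Set Ω :=
  {ω | ∃ p ∈ K ×ˢ K ∩ {p : X × X | dist p.1 p.2 ≤ η}, δ ≤ dist (g ω p.1) (g ω p.2)}

theorem oscillationEvent_mono {g : Ω → X → Y} {K : Set X} {η η' : ℝ} (h : η ≤ η') (δ : ℝ) :
    oscillationEvent g K η δ ⊆ oscillationEvent g K η' δ :=
  fun _ ⟨p, ⟨hpK, hpη⟩, hpδ⟩ => ⟨p, ⟨hpK, (show dist p.1 p.2 ≤ η from hpη).trans h⟩, hpδ⟩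

theorem measurableSet_oscillationEvent [MeasurableSpace Ω] [MeasurableSpace Y]
    [OpensMeasurableSpace Y] [SecondCountableTopology Y] {g : Ω → X → Y} {K : Set X}
    (hK : IsCompact K) (hg_meas : ∀ x, Measurable fun ω => g ω x)
    (hg_cont : ∀ ω, ContinuousOn (g ω) K) (η δ : ℝ) : MeasurableSet (oscillationEvent g K η δ) := by
  refine measurableSet_exists_le_of_isCompact
    ((hK.prod hK).inter_right (isClosed_le continuous_dist continuous_const))
    (fun p => (hg_meas p.1).dist (hg_meas p.2)) (fun ω => ?_) δ
  have hgK : ContinuousOn (fun p : X × X => (g ω p.1, g ω p.2)) (K ×ˢ K) :=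
    ((hg_cont ω).comp continuousOn_fst fun _ hp => hp.1).prodMk
      ((hg_cont ω).comp continuousOn_snd fun _ hp => hp.2)
  exact (continuous_dist.comp_continuousOn hgK).mono Set.inter_subset_left

theorem iInter_oscillationEvent_eq_empty {g : Ω → X → Y} {K : Set X} (hK : IsCompact K)
    (hg_cont : ∀ ω, ContinuousOn (g ω) K) {δ : ℝ} (hδ : 0 < δ) :
    ⋂ n : ℕ, oscillationEvent g K (1 / ((n : ℝ) + 1)) δ = ∅ := by
  refine Set.eq_empty_iff_forall_notMem.mpr fun ω hω => ?_
  obtain ⟨η, hη, hηK⟩ := Metric.uniformContinuousOn_iff.mp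
    (hK.uniformContinuousOn_of_continuous (hg_cont ω)) δ hδ
  obtain ⟨n, hn⟩ := exists_nat_one_div_lt hη
  obtain ⟨p, ⟨⟨hp₁, hp₂⟩, hpη⟩, hpδ⟩ := Set.mem_iInter.mp hω n
  exact (hηK p.1 hp₁ p.2 hp₂ (lt_of_le_of_lt hpη hn)).not_ge hpδ

theorem exists_pos_measure_oscillationEvent_le [MeasurableSpace Ω] [MeasurableSpace Y]
    [OpensMeasurableSpace Y] [SecondCountableTopology Y] (μ : Measure Ω) [IsFiniteMeasure μ]
    {g : Ω → X → Y} {K : Set X} (hK : IsCompact K) (hg_meas : ∀ x, Measurable fun ω => g ω x)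
    (hg_cont : ∀ ω, ContinuousOn (g ω) K) {δ : ℝ} (hδ : 0 < δ) {ε : ℝ≥0∞} (hε : 0 < ε) :
    ∃ η > 0, μ (oscillationEvent g K η δ) ≤ ε := by
  have hlim := tendsto_measure_iInter_atTop (μ := μ)
    (fun n : ℕ => (measurableSet_oscillationEvent hK hg_meas hg_cont _ δ).nullMeasurableSet)
    (fun m n hmn => oscillationEvent_mono (Nat.one_div_le_one_div hmn) δ)
    ⟨0, measure_ne_top μ _⟩
  rw [iInter_oscillationEvent_eq_empty hK hg_cont hδ, measure_empty] at hlim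
  obtain ⟨n, hn⟩ := (hlim.eventually_le_const hε).exists
  exact ⟨1 / ((n : ℝ) + 1), Nat.one_div_pos_of_nat, hn⟩

theorem measure_dist_comp_le [MeasurableSpace Ω] {Ω' : Type*} [MeasurableSpace Ω']
    {μ : Measure Ω'} {ν : Measure Ω} {σ : Ω' → Ω} (hσ : MeasurePreserving σ μ ν)
    (g : Ω → X → Y) (K : Set X) (u v : Ω' → X) (η δ : ℝ) :
    μ {ω | δ ≤ dist (g (σ ω) (u ω)) (g (σ ω) (v ω))} ≤
      ν (oscillationEvent g K η δ) + μ {ω | η ≤ dist (u ω) (v ω)} +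
        μ {ω | u ω ∈ K ∧ v ω ∈ K}ᶜ := by
  have hsub : {ω | δ ≤ dist (g (σ ω) (u ω)) (g (σ ω) (v ω))} ⊆
      σ ⁻¹' oscillationEvent g K η δ ∪ {ω | η ≤ dist (u ω) (v ω)} ∪
        {ω | u ω ∈ K ∧ v ω ∈ K}ᶜ := by
    intro ω hω
    by_cases hmem : u ω ∈ K ∧ v ω ∈ K
    · rcases lt_or_ge (dist (u ω) (v ω)) η with hη | hη
      · exact .inl (.inl ⟨(u ω, v ω), ⟨hmem, hη.le⟩, hω⟩)
      · exact .inl (.inr hη)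
    · exact .inr hmem
  calc _ ≤ μ (σ ⁻¹' oscillationEvent g K η δ ∪ {ω | η ≤ dist (u ω) (v ω)} ∪
          {ω | u ω ∈ K ∧ v ω ∈ K}ᶜ) := measure_mono hsub
    _ ≤ μ (σ ⁻¹' oscillationEvent g K η δ) + μ {ω | η ≤ dist (u ω) (v ω)} +
          μ {ω | u ω ∈ K ∧ v ω ∈ K}ᶜ :=
        (measure_union_le _ _).trans (add_le_add_left (measure_union_le _ _) _)
    _ ≤ _ := by gcongr; exact hσ.measure_preimage_le _

end Oscillation

/-- Let `H` be a Polish metric space, `(Ω, F, P)` a probability space, and for `t ≥ 0`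
let `σ t : Ω → Ω` be measure-preserving. Let `g : Ω × H → H` be jointly measurable
with `x ↦ g ω x` continuous for each `ω`, and `u t, v t : Ω → H` measurable.
Assume (i) tightness: for every `ε > 0` there are a compact `K ⊆ H` and `t_ε` with
`P(u t ∈ K and v t ∈ K) ≥ 1 − ε` for `t ≥ t_ε`; (ii) `dist (u t) (v t) → 0` in
probability as `t → ∞`. Then `dist (g (σ t ω) (u t ω)) (g (σ t ω) (v t ω)) → 0`
in probability as `t → ∞`. -/
theorem stmt_9 {Ω : Type*} [MeasurableSpace Ω] (P : Measure Ω) [IsProbabilityMeasure P]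
    {H : Type*} [MetricSpace H] [PolishSpace H] [MeasurableSpace H] [BorelSpace H]
    (σ : ℝ → Ω → Ω) (hσ : ∀ t : ℝ, 0 ≤ t → MeasurePreserving (σ t) P P)
    (g : Ω → H → H)
    (hg_meas : Measurable (fun p : Ω × H => g p.1 p.2))
    (hg_cont : ∀ ω, Continuous (g ω))
    (u v : ℝ → Ω → H)
    (hu_meas : ∀ t : ℝ, 0 ≤ t → Measurable (u t))
    (hv_meas : ∀ t : ℝ, 0 ≤ t → Measurable (v t))
    (htight : ∀ ε : ℝ, 0 < ε → ∃ K : Set H, IsCompact K ∧ ∃ tε : ℝ, 0 ≤ tε ∧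
      ∀ t : ℝ, tε ≤ t → 1 - ENNReal.ofReal ε ≤ P {ω | u t ω ∈ K ∧ v t ω ∈ K})
    (hconv : ∀ δ : ℝ, 0 < δ →
      Tendsto (fun t : ℝ => P {ω | δ ≤ dist (u t ω) (v t ω)}) atTop (nhds 0)) :
    ∀ δ : ℝ, 0 < δ →
      Tendsto (fun t : ℝ =>
        P {ω | δ ≤ dist (g (σ t ω) (u t ω)) (g (σ t ω) (v t ω))}) atTop (nhds 0) := by
  intro δ hδ
  refine ENNReal.tendsto_nhds_zero.mpr fun ε hε => ?_
  obtain ⟨r, -, hr0, hrε⟩ := ENNReal.lt_iff_exists_real_btwn.mp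
    (ENNReal.div_pos hε.ne' (show (3 : ℝ≥0∞) ≠ ∞ by norm_num))
  obtain ⟨K, hK, tε, htε, hKt⟩ := htight r (ENNReal.ofReal_pos.mp hr0)
  obtain ⟨η, hη, hηr⟩ := exists_pos_measure_oscillationEvent_le P (g := g) hK
    (fun x => hg_meas.of_uncurry_right) (fun ω => (hg_cont ω).continuousOn) hδ hr0
  filter_upwards [eventually_ge_atTop tε,
    ENNReal.tendsto_nhds_zero.mp (hconv η hη) _ hr0] with t ht hdist
  have ht0 : 0 ≤ t := htε.trans ht
  have hleave : P {ω | u t ω ∈ K ∧ v t ω ∈ K}ᶜ ≤ ENNReal.ofReal r := by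
    have hgood : MeasurableSet {ω | u t ω ∈ K ∧ v t ω ∈ K} :=
      (hK.isClosed.measurableSet.preimage (hu_meas t ht0)).inter
        (hK.isClosed.measurableSet.preimage (hv_meas t ht0))
    rw [prob_compl_eq_one_sub hgood]
    exact tsub_le_iff_tsub_le.mp (hKt t ht)
  calc _ ≤ _ := measure_dist_comp_le (hσ t ht0) g K (u t) (v t) η δ
    _ ≤ ε / 3 + ε / 3 + ε / 3 := by gcongr <;> exact le_trans ‹_› hrε.le
    _ = ε := ENNReal.add_thirds ε
end
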